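/- In A = F[x,y]/(x^p, y^p) with char F = p, let r = 2j < p, m = (t−u mod r), n = (v−t mod r), m + n = j, and let h be such that hr < p, with e₀, f₀ ∈ F satisfying: if e₀ ≠ 0 then hr + n ≥ p, and if f₀ ≠ 0 then hr + m ≥ p. Then the pair of maps (degree 0: matrix ((0, e₀ y^{hr−j}(xy)^m), (f₀ x^{hr−j}(xy)^n, 0)) on A⊕A; degree 1: multiplication by e₀ y^{hr} + f₀ x^{hr}) is a chain map from [A⊕A --δ--> A] to itself, where δ(a,b) = a x^m + b y^n. -/
import Mathlib


open MvPolynomial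

set_option maxHeartbeats 1000000

/-- The truncated polynomial algebra `A = F[x,y]/(x^p, y^p)`. -/
noncomputable abbrev TruncAlg (F : Type*) [Field F] (p : ℕ) :=
  MvPolynomial (Fin 2) F ⧸
    Ideal.span ({X 0 ^ p, X 1 ^ p} : Set (MvPolynomial (Fin 2) F))

noncomputable def xx (F : Type*) [Field F] (p : ℕ) : TruncAlg F p :=
  Ideal.Quotient.mk _ (X 0)

noncomputable def yy (F : Type*) [Field F] (p : ℕ) : TruncAlg F p :=
  Ideal.Quotient.mk _ (X 1)


theorem truncAlg_smul_def (F : Type*) [Field F] (p : ℕ) (c : F) (z : TruncAlg F p) :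
    c • z = algebraMap F (TruncAlg F p) c * z := by
  obtain ⟨w, rfl⟩ := Ideal.Quotient.mk_surjective z
  have h1 : c • (Ideal.Quotient.mk _ w : TruncAlg F p) = Ideal.Quotient.mk _ (c • w) := rfl
  rw [h1, smul_eq_C_mul, map_mul]
  rfl

/-- Map D.3 of the catalog: for r = 2j < p, hr < p, with e₀ ≠ 0 → hr + n ≥ p and
f₀ ≠ 0 → hr + m ≥ p, the pair (degree-0 matrix ((0, e₀y^{hr−j}(xy)^m),
(f₀x^{hr−j}(xy)^n, 0)), degree-1 multiplication by e₀y^{hr} + f₀x^{hr}) is a chain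
self-map of [A⊕A --δ--> A], δ(a,b) = a x^m + b y^n. -/
theorem D3_chain_map (F : Type*) [Field F] (p r : ℕ) [CharP F p] (u v t : ZMod r)
    (m n j h : ℕ) (hm : m = (t - u).val) (hn : n = (v - t).val) (hj : m + n = j)
    (hr2j : r = 2 * j) (hrp : r < p) (hhr : h * r < p) (e₀ f₀ : F)
    (he : e₀ ≠ 0 → p ≤ h * r + n) (hf : f₀ ≠ 0 → p ≤ h * r + m) :
    ∀ a b : TruncAlg F p,
      (b * (f₀ • (xx F p ^ (h * r - j) * (xx F p * yy F p) ^ n))) * xx F p ^ m +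
          (a * (e₀ • (yy F p ^ (h * r - j) * (xx F p * yy F p) ^ m))) * yy F p ^ n =
        (a * xx F p ^ m + b * yy F p ^ n) *
          (e₀ • yy F p ^ (h * r) + f₀ • xx F p ^ (h * r)) := by

  intro a b
  have hx0 : ∀ k, p ≤ k → xx F p ^ k = 0 := by
    intro k hk
    have hxp : xx F p ^ p = 0 := by
      show Ideal.Quotient.mk _ (X 0) ^ p = 0
      rw [← map_pow, Ideal.Quotient.eq_zero_iff_mem]
      exact Ideal.subset_span (by simp)
    rw [show k = p + (k - p) from by omega, pow_add, hxp, zero_mul]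
  have hy0 : ∀ k, p ≤ k → yy F p ^ k = 0 := by
    intro k hk
    have hyp : yy F p ^ p = 0 := by
      show Ideal.Quotient.mk _ (X 1) ^ p = 0
      rw [← map_pow, Ideal.Quotient.eq_zero_iff_mem]
      exact Ideal.subset_span (by simp)
    rw [show k = p + (k - p) from by omega, pow_add, hyp, zero_mul]
  simp only [truncAlg_smul_def]
  set x := xx F p
  set y := yy F p
  set cE := algebraMap F (TruncAlg F p) e₀ with hcE
  set cF := algebraMap F (TruncAlg F p) f₀ with hcF
  have hF : (b * (cF * (x ^ (h * r - j) * (x * y) ^ n))) * x ^ m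
        = b * y ^ n * (cF * x ^ (h * r)) ∧ a * x ^ m * (cF * x ^ (h * r)) = 0 := by
    by_cases hf0 : f₀ = 0
    · simp [hcF, hf0]
    · have h1 : p ≤ h * r + m := hf hf0
      have hh : 0 < h := by
        rcases Nat.eq_zero_or_pos h with h0 | h0
        · subst h0; simp at h1; omega
        · exact h0
      have hrle : j ≤ h * r := le_trans (by omega) (Nat.le_mul_of_pos_left r hh)
      constructor
      · have key : x ^ (h * r - j) * (x * y) ^ n * x ^ m = x ^ (h * r) * y ^ n := by
          conv_rhs => rw [show h * r = (h * r - j) + n + m from by omega]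
          rw [mul_pow, pow_add, pow_add]; ring
        linear_combination b * cF * key
      · have key : x ^ m * x ^ (h * r) = 0 := by
          rw [← pow_add]; exact hx0 _ (by omega)
        linear_combination a * cF * key
  have hE : (a * (cE * (y ^ (h * r - j) * (x * y) ^ m))) * y ^ n
        = a * x ^ m * (cE * y ^ (h * r)) ∧ b * y ^ n * (cE * y ^ (h * r)) = 0 := by
    by_cases he0 : e₀ = 0
    · simp [hcE, he0]
    · have h1 : p ≤ h * r + n := he he0
      have hh : 0 < h := by
        rcases Nat.eq_zero_or_pos h with h0 | h0
        · subst h0; simp at h1; omega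
        · exact h0
      have hrle : j ≤ h * r := le_trans (by omega) (Nat.le_mul_of_pos_left r hh)
      constructor
      · have key : y ^ (h * r - j) * (x * y) ^ m * y ^ n = y ^ (h * r) * x ^ m := by
          conv_rhs => rw [show h * r = (h * r - j) + m + n from by omega]
          rw [mul_pow, pow_add, pow_add]; ring
        linear_combination a * cE * key
      · have key : y ^ n * y ^ (h * r) = 0 := by
          rw [← pow_add]; exact hy0 _ (by omega)
        linear_combination b * cE * key
  obtain ⟨hF1, hF2⟩ := hF
  obtain ⟨hE1, hE2⟩ := hE
  linear_combination hF1 + hE1 - hF2 - hE2
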